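/- Let α be a nonempty finite type, let n : α → ℕ be a family of counts with total count N = ∑_{a} n(a) > 0, and let θ : α → ℝ be a probability mass function (θ(a) ≥ 0 for all a and ∑_a θ(a) = 1) such that θ(a) > 0 whenever n(a) > 0. Then equality ∑_a (n(a) : ℝ) · log(θ(a)) = ∑_a (n(a) : ℝ) · log((n(a) : ℝ) / N) holds if and only if θ(a) = (n(a) : ℝ) / N for every a ∈ α. -/

import Mathlib

/-!
Gibbs' inequality with its equality case. For `p, q ≥ 0` with `p a > 0 → q a > 0`, the slack
`p log p - p log q + q - p` equals `q · klFun (p / q)`, where `klFun x = x log x + 1 - x` is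
nonnegative and vanishes only at `x = 1`. When `∑ q = ∑ p` the slacks add up to
`∑ p log p - ∑ p log q`, so this difference vanishes iff `q = p`. The theorem is the case
`p = n / N`, after scaling by `N`.
-/

open Real InformationTheory Finset

lemma mul_klFun_div {p q : ℝ} (hp : 0 ≤ p) (hpq : 0 < p → 0 < q) :
    q * klFun (p / q) = p * log p - p * log q + q - p := by
  rcases hp.eq_or_lt with rfl | hp
  · simp [klFun_zero]
  · have hq := hpq hp
    rw [klFun_apply, log_div hp.ne' hq.ne']
    field_simp

lemma mul_klFun_div_eq_zero_iff {p q : ℝ} (hp : 0 ≤ p) (hq : 0 ≤ q) (hpq : 0 < p → 0 < q) :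
    q * klFun (p / q) = 0 ↔ q = p := by
  rcases hq.eq_or_lt with rfl | hq
  · have : p = 0 := by contrapose! hpq; exact ⟨hp.lt_of_ne' hpq, le_rfl⟩
    simp [this]
  · rw [mul_eq_zero, klFun_eq_zero_iff (div_nonneg hp hq.le), div_eq_one_iff_eq hq.ne']
    simp [hq.ne', eq_comm]

theorem sum_mul_log_eq_sum_mul_log_iff {ι : Type*} [Fintype ι] {p q : ι → ℝ}
    (hp : ∀ i, 0 ≤ p i) (hq : ∀ i, 0 ≤ q i) (hsum : ∑ i, q i = ∑ i, p i)
    (hpq : ∀ i, 0 < p i → 0 < q i) :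
    ∑ i, p i * log (q i) = ∑ i, p i * log (p i) ↔ q = p := by
  have hgap : ∑ i, p i * log (p i) - ∑ i, p i * log (q i) = ∑ i, q i * klFun (p i / q i) := by
    simp only [mul_klFun_div (hp _) (hpq _), sum_sub_distrib, sum_add_distrib, hsum]
    ring
  rw [← sub_eq_zero, ← neg_eq_zero, neg_sub, hgap,
    sum_eq_zero_iff_of_nonneg fun i _ => mul_nonneg (hq i) (klFun_nonneg (div_nonneg (hp i) (hq i))),
    funext_iff]
  simp only [mem_univ, true_implies, mul_klFun_div_eq_zero_iff (hp _) (hq _) (hpq _)]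

theorem multinomial_loglik_eq_iff_general {α : Type*} [Fintype α]
    (n : α → ℕ) (N : ℕ) (hN : N = ∑ a, n a) (hNpos : 0 < N)
    (θ : α → ℝ) (hθ0 : ∀ a, 0 ≤ θ a) (hθ1 : ∑ a, θ a = 1)
    (hpos : ∀ a, 0 < n a → 0 < θ a) :
    (∑ a, (n a : ℝ) * Real.log (θ a) =
        ∑ a, (n a : ℝ) * Real.log ((n a : ℝ) / (N : ℝ))) ↔
      ∀ a, θ a = (n a : ℝ) / (N : ℝ) := by
  have hNR : (0 : ℝ) < N := Nat.cast_pos.mpr hNpos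
  have hscale : ∀ f : α → ℝ, ∑ a, (n a : ℝ) * f a = N * ∑ a, (n a : ℝ) / N * f a := fun f => by
    rw [mul_sum]
    exact sum_congr rfl fun a _ => by field_simp
  have hfreq_sum : ∑ a, θ a = ∑ a, (n a : ℝ) / N := by
    rw [hθ1, ← sum_div, ← Nat.cast_sum, ← hN, div_self hNR.ne']
  rw [hscale, hscale, mul_right_inj' hNR.ne',
    sum_mul_log_eq_sum_mul_log_iff (fun a => by positivity) hθ0 hfreq_sum
      fun a ha => hpos a (Nat.cast_pos.mp ((div_pos_iff_of_pos_right hNR).mp ha)),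
    funext_iff]

/-- The multinomial log-likelihood attains its global maximum
exactly at the empirical frequencies. -/
theorem multinomial_loglik_eq_iff {α : Type*} [Fintype α] [Nonempty α]
    (n : α → ℕ) (N : ℕ) (hN : N = ∑ a, n a) (hNpos : 0 < N)
    (θ : α → ℝ) (hθ0 : ∀ a, 0 ≤ θ a) (hθ1 : ∑ a, θ a = 1)
    (hpos : ∀ a, 0 < n a → 0 < θ a) :
    (∑ a, (n a : ℝ) * Real.log (θ a) =
        ∑ a, (n a : ℝ) * Real.log ((n a : ℝ) / (N : ℝ))) ↔
      ∀ a, θ a = (n a : ℝ) / (N : ℝ) :=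
  multinomial_loglik_eq_iff_general n N hN hNpos θ hθ0 hθ1 hpos
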